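/- arXiv:2206.11830 — 5 statements merged into one kernel-verified Lean document; each statement's English description precedes it below -/
import Mathlib

section
/- Let U be an open subset of the set of ordered pairs (v, w) of orthonormal vectors in ℝ³, and let f : ℝ³ → ℝ be C³ on an open cone containing ℙ₁U ∪ ℙ₂U, positively homogeneous of degree 2 there (f(tx) = t²f(x) for t > 0). Suppose that for every (v, w) ∈ U and every θ ∈ ℝ with (v cos θ + w sin θ, −v sin θ + w cos θ) ∈ U, one has f(v cos θ + w sin θ) + f(−v sin θ + w cos θ) = f(v) + f(w). Then all third-order partial derivatives of f vanish at every point of ℙ₁U ∪ ℙ₂U: ∂³f(v)/∂v_i∂v_j∂v_k = 0 for all i, j, k ∈ {1,2,3}. -/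
/-!
Differentiating the rotation invariance at `θ = 0` gives `Df(a) b = Df(b) a` for `(a, b) ∈ U`.
Since `U` is relatively open, this identity may in turn be differentiated along any curve of
orthonormal pairs through `(a, b)`. Tilting `b` towards a unit normal `c` of the pair gives
`Df(a) c = D²f(b)(c, a)`; rotating the pair gives
`D²f(a)(b, b) + D²f(b)(a, a) = Df(a) a + Df(b) b`; tilting `a` towards `c` in the latter and using
Euler's identity `D²f(a)(c, a) = Df(a) c` gives `D³f(a)(c, b, b) = 0`.

Fix `(x, w) ∈ U` and `u = x × w`. Applied to the pairs `(x, cos φ • w + sin φ • u)` with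
`c = -sin φ • w + cos φ • u`, the last identity says that a cubic trigonometric polynomial in `φ`
vanishes near `0`; by analyticity all its coefficients vanish. Together with the symmetry of
`D³f(x)` and Euler's identity `D³f(x)(·, ·, x) = 0`, this kills `D³f(x)` on the frame `x, w, u`.
Points of `ℙ₂U` are handled by swapping the pairs, which preserves `Df(a) b = Df(b) a`.
-/

open Matrix

/-- The set of ordered pairs of orthonormal vectors in `ℝ³`. -/
def OrthonormalPairsR3 : Set ((Fin 3 → ℝ) × (Fin 3 → ℝ)) :=
  {p | p.1 ⬝ᵥ p.1 = 1 ∧ p.2 ⬝ᵥ p.2 = 1 ∧ p.1 ⬝ᵥ p.2 = 0}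

open Filter Topology Real

section Calculus

variable {E F : Type*} [NormedAddCommGroup E] [NormedSpace ℝ E]
  [NormedAddCommGroup F] [NormedSpace ℝ F]

theorem HasDerivAt.eq_zero_of_eventually_const {g : ℝ → F} {g' c : F} {t : ℝ}
    (hg : HasDerivAt g g' t) (hc : ∀ᶠ s in 𝓝 t, g s = c) : g' = 0 :=
  hg.unique ((hasDerivAt_const t c).congr_of_eventuallyEq hc)

theorem HasFDerivAt.eq_zero_of_eventually_const {g : E → F} {g' : E →L[ℝ] F} {c : F} {x : E}
    (hg : HasFDerivAt g g' x) (hc : ∀ᶠ y in 𝓝 x, g y = c) : g' = 0 :=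
  hg.unique ((hasFDerivAt_const c x).congr_of_eventuallyEq hc)

theorem ContinuousAt.eventually_of_nhdsWithin {X : Type*} [TopologicalSpace X] {S : Set X}
    {γ : ℝ → X} {t : ℝ} {p : X} {P : X → Prop} (hγ : ContinuousAt γ t) (hγt : γ t = p)
    (hγS : ∀ s, γ s ∈ S) (hP : ∀ᶠ q in 𝓝[S] p, P q) : ∀ᶠ s in 𝓝 t, P (γ s) :=
  (tendsto_nhdsWithin_iff.2 ⟨hγt ▸ hγ, .of_forall hγS⟩).eventually hP

theorem hasDerivAt_cos_smul_add_sin_smul (a b : E) :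
    HasDerivAt (fun s : ℝ => cos s • a + sin s • b) b 0 := by
  refine (((hasDerivAt_cos 0).smul_const a).add ((hasDerivAt_sin 0).smul_const b)).congr_deriv ?_
  simp

theorem hasDerivAt_neg_sin_smul_add_cos_smul (a b : E) :
    HasDerivAt (fun s : ℝ => -sin s • a + cos s • b) (-a) 0 := by
  refine (((hasDerivAt_sin 0).neg.smul_const a).add
    ((hasDerivAt_cos 0).smul_const b)).congr_deriv ?_
  simp

variable {f : E → F} {x : E}

theorem ContDiffAt.hasFDerivAt_fderiv (hf : ContDiffAt ℝ 2 f x) :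
    HasFDerivAt (fderiv ℝ f) (fderiv ℝ (fderiv ℝ f) x) x :=
  ((hf.fderiv_right (m := 1) le_rfl).differentiableAt one_ne_zero).hasFDerivAt

theorem ContDiffAt.hasFDerivAt_fderiv_fderiv (hf : ContDiffAt ℝ 3 f x) :
    HasFDerivAt (fderiv ℝ (fderiv ℝ f)) (fderiv ℝ (fderiv ℝ (fderiv ℝ f)) x) x :=
  (hf.fderiv_right (m := 2) le_rfl).hasFDerivAt_fderiv

theorem ContDiffAt.fderiv_fderiv_fderiv_swap_left (hf : ContDiffAt ℝ 3 f x) (h k l : E) :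
    fderiv ℝ (fderiv ℝ (fderiv ℝ f)) x h k l = fderiv ℝ (fderiv ℝ (fderiv ℝ f)) x k h l := by
  rw [(hf.fderiv_right (m := 2) le_rfl).isSymmSndFDerivAt (by simp) h k]

theorem ContDiffAt.fderiv_fderiv_fderiv_swap_right (hf : ContDiffAt ℝ 3 f x) (h k l : E) :
    fderiv ℝ (fderiv ℝ (fderiv ℝ f)) x h k l = fderiv ℝ (fderiv ℝ (fderiv ℝ f)) x h l k := by
  have hsymm : ∀ᶠ y in 𝓝 x, fderiv ℝ (fderiv ℝ f) y k l - fderiv ℝ (fderiv ℝ f) y l k = 0 := by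
    filter_upwards [hf.eventually (by simp)] with y hy
    rw [hy.isSymmSndFDerivAt (by simp; norm_num) k l, sub_self]
  have hD := hf.hasFDerivAt_fderiv_fderiv
  have := congrArg (· h) (((hD.clm_apply (hasFDerivAt_const k x)).clm_apply
    (hasFDerivAt_const l x)).sub ((hD.clm_apply (hasFDerivAt_const l x)).clm_apply
    (hasFDerivAt_const k x)) |>.eq_zero_of_eventually_const hsymm)
  simpa [sub_eq_zero] using this

end Calculus

section Homogeneous

variable {E : Type*} [NormedAddCommGroup E] [NormedSpace ℝ E]
  {C : Set E} {f : E → ℝ} {n : ℕ} {x : E}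

theorem fderiv_apply_self_of_homogeneous
    (hhom : ∀ y ∈ C, ∀ t : ℝ, 0 < t → f (t • y) = t ^ n * f y) (hx : x ∈ C)
    (hf : DifferentiableAt ℝ f x) : fderiv ℝ f x x = n * f x := by
  have hray : HasDerivAt (fun t : ℝ => t • x) x 1 := by
    simpa using (hasDerivAt_id (1 : ℝ)).smul_const x
  have hcomp : HasDerivAt (fun t : ℝ => f (t • x)) (fderiv ℝ f x x) 1 :=
    hf.hasFDerivAt.comp_hasDerivAt_of_eq 1 hray (one_smul ℝ x).symm
  have hpow : HasDerivAt (fun t : ℝ => t ^ n * f x) (n * f x) 1 := by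
    simpa using (hasDerivAt_pow n (1 : ℝ)).mul_const (f x)
  exact hcomp.unique (hpow.congr_of_eventuallyEq
    (by filter_upwards [eventually_gt_nhds one_pos] with t ht using hhom x hx t ht))

theorem fderiv_fderiv_apply_self_of_homogeneous (hC : IsOpen C) (hf : ContDiffOn ℝ 2 f C)
    (hhom : ∀ y ∈ C, ∀ t : ℝ, 0 < t → f (t • y) = t ^ n * f y) (hx : x ∈ C) (h : E) :
    fderiv ℝ (fderiv ℝ f) x h x = (n - 1) * fderiv ℝ f x h := by
  have hfx := hf.contDiffAt (hC.mem_nhds hx)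
  have heuler : ∀ᶠ y in 𝓝 x, fderiv ℝ f y y - n * f y = 0 := by
    filter_upwards [hC.mem_nhds hx] with y hy
    rw [fderiv_apply_self_of_homogeneous hhom hy
      ((hf.contDiffAt (hC.mem_nhds hy)).differentiableAt two_ne_zero), sub_self]
  have := congrArg (· h) (((hfx.hasFDerivAt_fderiv.clm_apply (hasFDerivAt_id x)).sub
    ((hfx.differentiableAt two_ne_zero).hasFDerivAt.const_mul (n : ℝ))
    ).eq_zero_of_eventually_const heuler)
  simp only [ContinuousLinearMap.comp_id, id_eq, _root_.sub_apply, _root_.add_apply,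
    ContinuousLinearMap.flip_apply, _root_.smul_apply, smul_eq_mul, _root_.zero_apply] at this
  linarith

theorem fderiv_fderiv_fderiv_apply_self_of_homogeneous (hC : IsOpen C)
    (hf : ContDiffOn ℝ 3 f C) (hhom : ∀ y ∈ C, ∀ t : ℝ, 0 < t → f (t • y) = t ^ n * f y)
    (hx : x ∈ C) (h k : E) :
    fderiv ℝ (fderiv ℝ (fderiv ℝ f)) x h k x = (n - 2) * fderiv ℝ (fderiv ℝ f) x h k := by
  have hfx := hf.contDiffAt (hC.mem_nhds hx)
  have heuler : ∀ᶠ y in 𝓝 x,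
      fderiv ℝ (fderiv ℝ f) y k y - (n - 1) * fderiv ℝ f y k = 0 := by
    filter_upwards [hC.mem_nhds hx] with y hy
    rw [fderiv_fderiv_apply_self_of_homogeneous hC (hf.of_le (by norm_num)) hhom hy, sub_self]
  have := congrArg (· h) ((((hfx.hasFDerivAt_fderiv_fderiv.clm_apply
    (hasFDerivAt_const k x)).clm_apply (hasFDerivAt_id x)).sub
    (((hfx.of_le (by norm_num)).hasFDerivAt_fderiv.clm_apply
    (hasFDerivAt_const k x)).const_mul ((n : ℝ) - 1))).eq_zero_of_eventually_const heuler)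
  simp only [ContinuousLinearMap.comp_id, ContinuousLinearMap.comp_zero, zero_add, id_eq,
    _root_.sub_apply, _root_.add_apply, ContinuousLinearMap.flip_apply, _root_.smul_apply,
    smul_eq_mul, _root_.zero_apply] at this
  rw [hfx.isSymmSndFDerivAt (by simp; norm_num) k h] at this
  linarith

end Homogeneous

theorem trig_cubic_coeffs_eq_zero {a b c d : ℝ}
    (h : ∀ᶠ φ in 𝓝 0, a * cos φ ^ 3 + b * cos φ ^ 2 * sin φ + c * cos φ * sin φ ^ 2
      + d * sin φ ^ 3 = 0) :
    a = 0 ∧ b = 0 ∧ c = 0 ∧ d = 0 := by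
  have hall : ∀ φ, a * cos φ ^ 3 + b * cos φ ^ 2 * sin φ + c * cos φ * sin φ ^ 2
      + d * sin φ ^ 3 = 0 := by
    have hanalytic : AnalyticOnNhd ℝ (fun φ => a * cos φ ^ 3 + b * cos φ ^ 2 * sin φ
        + c * cos φ * sin φ ^ 2 + d * sin φ ^ 3) Set.univ := fun φ _ => by fun_prop
    exact congrFun (hanalytic.eq_of_eventuallyEq analyticOnNhd_const h)
  have h0 := hall 0
  have h1 := hall (π / 2)
  have h2 := hall (π / 4)
  have h3 := hall (-(π / 4))
  simp only [cos_zero, sin_zero, cos_pi_div_two, sin_pi_div_two, cos_pi_div_four,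
    sin_pi_div_four, cos_neg, sin_neg] at h0 h1 h2 h3
  have hs : (0 : ℝ) < √2 / 2 := by positivity
  have hsum : a + b + c + d = 0 := by
    have : (a + b + c + d) * (√2 / 2) ^ 3 = 0 := by linear_combination h2
    simpa [hs.ne'] using this
  have hdiff : a - b + c - d = 0 := by
    have : (a - b + c - d) * (√2 / 2) ^ 3 = 0 := by linear_combination h3
    simpa [hs.ne'] using this
  refine ⟨by linarith, by linarith, by linarith, by linarith⟩

section OrthonormalPairs

local notation "ℝ³" => Fin 3 → ℝ

theorem swap_mem_orthonormalPairsR3 {p : ℝ³ × ℝ³} (hp : p ∈ OrthonormalPairsR3) :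
    p.swap ∈ OrthonormalPairsR3 :=
  ⟨hp.2.1, hp.1, dotProduct_comm p.1 p.2 ▸ hp.2.2⟩

theorem Filter.Eventually.nhdsWithin_orthonormalPairsR3_swap {P : ℝ³ × ℝ³ → Prop}
    {p : ℝ³ × ℝ³} (h : ∀ᶠ q in 𝓝[OrthonormalPairsR3] p, P q) :
    ∀ᶠ q in 𝓝[OrthonormalPairsR3] p.swap, P q.swap :=
  (continuous_swap.continuousWithinAt.tendsto_nhdsWithin
    fun _ hq => swap_mem_orthonormalPairsR3 hq).eventually h

theorem rotation_mem_orthonormalPairsR3 {a b : ℝ³} (hab : (a, b) ∈ OrthonormalPairsR3)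
    (θ : ℝ) : (cos θ • a + sin θ • b, -sin θ • a + cos θ • b) ∈ OrthonormalPairsR3 := by
  obtain ⟨haa, hbb, hab⟩ : a ⬝ᵥ a = 1 ∧ b ⬝ᵥ b = 1 ∧ a ⬝ᵥ b = 0 := hab
  have hba : b ⬝ᵥ a = 0 := by rwa [dotProduct_comm]
  refine ⟨?_, ?_, ?_⟩ <;> simp only [add_dotProduct, dotProduct_add, smul_dotProduct,
    dotProduct_smul, smul_eq_mul, haa, hbb, hab, hba]
  · linear_combination sin_sq_add_cos_sq θ
  · linear_combination sin_sq_add_cos_sq θ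
  · ring

theorem tilt_fst_mem_orthonormalPairsR3 {a b c : ℝ³} (hab : (a, b) ∈ OrthonormalPairsR3)
    (hac : (a, c) ∈ OrthonormalPairsR3) (hbc : (b, c) ∈ OrthonormalPairsR3) (s : ℝ) :
    (cos s • a + sin s • c, b) ∈ OrthonormalPairsR3 := by
  obtain ⟨haa, hbb, hab⟩ : a ⬝ᵥ a = 1 ∧ b ⬝ᵥ b = 1 ∧ a ⬝ᵥ b = 0 := hab
  obtain ⟨-, hcc, hac⟩ : a ⬝ᵥ a = 1 ∧ c ⬝ᵥ c = 1 ∧ a ⬝ᵥ c = 0 := hac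
  have hca : c ⬝ᵥ a = 0 := by rwa [dotProduct_comm]
  have hcb : c ⬝ᵥ b = 0 := by rw [dotProduct_comm]; exact hbc.2.2
  refine ⟨?_, hbb, ?_⟩ <;> simp only [add_dotProduct, dotProduct_add, smul_dotProduct,
    dotProduct_smul, smul_eq_mul, haa, hcc, hab, hac, hca, hcb]
  · linear_combination sin_sq_add_cos_sq s
  · ring

theorem tilt_snd_mem_orthonormalPairsR3 {a b c : ℝ³} (hab : (a, b) ∈ OrthonormalPairsR3)
    (hac : (a, c) ∈ OrthonormalPairsR3) (hbc : (b, c) ∈ OrthonormalPairsR3) (s : ℝ) :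
    (a, cos s • b + sin s • c) ∈ OrthonormalPairsR3 :=
  swap_mem_orthonormalPairsR3
    (tilt_fst_mem_orthonormalPairsR3 (swap_mem_orthonormalPairsR3 hab) hbc hac s)

theorem cross_mem_orthonormalPairsR3 {a b : ℝ³} (hab : (a, b) ∈ OrthonormalPairsR3) :
    (a, a ⨯₃ b) ∈ OrthonormalPairsR3 ∧ (b, a ⨯₃ b) ∈ OrthonormalPairsR3 := by
  obtain ⟨haa, hbb, hab⟩ : a ⬝ᵥ a = 1 ∧ b ⬝ᵥ b = 1 ∧ a ⬝ᵥ b = 0 := hab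
  have hcc : a ⨯₃ b ⬝ᵥ a ⨯₃ b = 1 := by
    rw [cross_dot_cross, haa, hbb, hab, dotProduct_comm b a, hab]; norm_num
  exact ⟨⟨haa, hcc, dot_self_cross a b⟩, ⟨hbb, hcc, dot_cross_self a b⟩⟩

theorem orthonormal_expansion {a b c : ℝ³} (hab : (a, b) ∈ OrthonormalPairsR3)
    (hac : (a, c) ∈ OrthonormalPairsR3) (hbc : (b, c) ∈ OrthonormalPairsR3) (h : ℝ³) :
    (h ⬝ᵥ a) • a + (h ⬝ᵥ b) • b + (h ⬝ᵥ c) • c = h := by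
  obtain ⟨haa, hbb, hab⟩ : a ⬝ᵥ a = 1 ∧ b ⬝ᵥ b = 1 ∧ a ⬝ᵥ b = 0 := hab
  obtain ⟨-, hcc, hac⟩ : a ⬝ᵥ a = 1 ∧ c ⬝ᵥ c = 1 ∧ a ⬝ᵥ c = 0 := hac
  have hbc : b ⬝ᵥ c = 0 := hbc.2.2
  let M : Matrix (Fin 3) (Fin 3) ℝ := ![a, b, c]
  have hM : M * Mᵀ = 1 := by
    ext i j
    rw [mul_apply', one_apply]
    simp only [transpose_apply]
    fin_cases i <;> fin_cases j <;>
      simp [M, haa, hbb, hcc, hab, hac, hbc, dotProduct_comm b a,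
        dotProduct_comm c a, dotProduct_comm c b]
  calc (h ⬝ᵥ a) • a + (h ⬝ᵥ b) • b + (h ⬝ᵥ c) • c = (M *ᵥ h) ᵥ* M := by
        rw [vecMul_eq_sum, Fin.sum_univ_three]
        simp [M, mulVec, dotProduct_comm]
    _ = (Mᵀ * M) *ᵥ h := by rw [← mulVec_mulVec, mulVec_transpose]
    _ = h := by rw [mul_eq_one_comm.mp hM, one_mulVec]

theorem trilinear_eq_zero_of_rotation (T : ℝ³ →L[ℝ] ℝ³ →L[ℝ] ℝ³ →L[ℝ] ℝ)
    (h12 : ∀ h k l, T h k l = T k h l) (h23 : ∀ h k l, T h k l = T h l k) {x w u : ℝ³}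
    (hxw : (x, w) ∈ OrthonormalPairsR3) (hxu : (x, u) ∈ OrthonormalPairsR3)
    (hwu : (w, u) ∈ OrthonormalPairsR3) (hx : ∀ h k, T h k x = 0)
    (hrot : ∀ᶠ φ in 𝓝 0,
      T (-sin φ • w + cos φ • u) (cos φ • w + sin φ • u) (cos φ • w + sin φ • u) = 0) :
    T = 0 := by
  have e1 : T u w u = T w u u := h12 u w u
  have e2 : T u u w = T w u u := (h23 u u w).trans e1
  have e3 : T w u w = T u w w := h12 w u w
  have e4 : T w w u = T u w w := (h23 w w u).trans e3
  obtain ⟨h₀, h₁, h₂, h₃⟩ := trig_cubic_coeffs_eq_zero (a := T u w w)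
      (b := 2 * T w u u - T w w w) (c := T u u u - 2 * T u w w) (d := -T w u u) <| by
    -- the cubic form `T (c φ) (b φ) (b φ)` in `(cos φ, sin φ)`, normalized by the symmetry of `T`
    filter_upwards [hrot] with φ hφ
    simp only [map_add, map_smul, _root_.add_apply, _root_.smul_apply, smul_eq_mul] at hφ
    linear_combination hφ - cos φ ^ 2 * sin φ * (e1 + e2) + cos φ * sin φ ^ 2 * (e3 + e4)
  have hx₂ : ∀ h k, T h x k = 0 := fun h k => by rw [h23]; exact hx h k
  have hx₁ : ∀ h k, T x h k = 0 := fun h k => by rw [h12]; exact hx₂ h k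
  have hwww : T w w w = 0 := by linarith
  have huuu : T u u u = 0 := by linarith
  have hwuu : T w u u = 0 := by linarith
  have hexp := orthonormal_expansion hxw hxu hwu
  ext h k l
  rw [← hexp h, ← hexp k, ← hexp l]
  simp [hx, hx₁, hx₂, hwww, huuu, hwuu, h₀, e1, e2, e3, e4]

variable {f : ℝ³ → ℝ} {a b c : ℝ³}

theorem fderiv_apply_comm_of_rotation_invariant {U : Set (ℝ³ × ℝ³)}
    (hab : (a, b) ∈ OrthonormalPairsR3) (hU : U ∈ 𝓝[OrthonormalPairsR3] (a, b))
    (hrot : ∀ θ : ℝ, (cos θ • a + sin θ • b, -sin θ • a + cos θ • b) ∈ U →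
      f (cos θ • a + sin θ • b) + f (-sin θ • a + cos θ • b) = f a + f b)
    (ha : DifferentiableAt ℝ f a) (hb : DifferentiableAt ℝ f b) :
    fderiv ℝ f a b = fderiv ℝ f b a := by
  have hinv : ∀ᶠ θ in 𝓝 0,
      f (cos θ • a + sin θ • b) + f (-sin θ • a + cos θ • b) = f a + f b :=
    ((by fun_prop : Continuous fun θ : ℝ => (cos θ • a + sin θ • b, -sin θ • a + cos θ • b))
      |>.continuousAt.eventually_of_nhdsWithin (by simp)
        (rotation_mem_orthonormalPairsR3 hab) hU).mono hrot
  have := ((ha.hasFDerivAt.comp_hasDerivAt_of_eq 0 (hasDerivAt_cos_smul_add_sin_smul a b)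
    (by simp)).add (hb.hasFDerivAt.comp_hasDerivAt_of_eq 0
    (hasDerivAt_neg_sin_smul_add_cos_smul a b) (by simp))).eq_zero_of_eventually_const hinv
  simp only [map_neg] at this
  linarith

theorem fderiv_apply_normal_eq_of_comm (hab : (a, b) ∈ OrthonormalPairsR3)
    (hac : (a, c) ∈ OrthonormalPairsR3) (hbc : (b, c) ∈ OrthonormalPairsR3)
    (hb : ContDiffAt ℝ 2 f b)
    (hcomm : ∀ᶠ q in 𝓝[OrthonormalPairsR3] (a, b), fderiv ℝ f q.1 q.2 = fderiv ℝ f q.2 q.1) :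
    fderiv ℝ f a c = fderiv ℝ (fderiv ℝ f) b c a := by
  have hβ := hasDerivAt_cos_smul_add_sin_smul b c
  have hzero : ∀ᶠ s in 𝓝 0, fderiv ℝ f a (cos s • b + sin s • c)
      - fderiv ℝ f (cos s • b + sin s • c) a = 0 :=
    ((by fun_prop : Continuous fun s : ℝ => (a, cos s • b + sin s • c))
      |>.continuousAt.eventually_of_nhdsWithin (by simp)
        (tilt_snd_mem_orthonormalPairsR3 hab hac hbc) hcomm).mono fun s hs => sub_eq_zero.2 hs
  have := (((fderiv ℝ f a).hasFDerivAt.comp_hasDerivAt 0 hβ).sub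
    ((hb.hasFDerivAt_fderiv.comp_hasDerivAt_of_eq 0 hβ (by simp)).clm_apply
      (hasDerivAt_const 0 a))).eq_zero_of_eventually_const hzero
  simp only [Function.comp_apply, cos_zero, one_smul, sin_zero, zero_smul, add_zero,
    map_zero] at this
  linarith

theorem fderiv_fderiv_apply_add_of_comm (hab : (a, b) ∈ OrthonormalPairsR3)
    (ha : ContDiffAt ℝ 2 f a) (hb : ContDiffAt ℝ 2 f b)
    (hcomm : ∀ᶠ q in 𝓝[OrthonormalPairsR3] (a, b), fderiv ℝ f q.1 q.2 = fderiv ℝ f q.2 q.1) :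
    fderiv ℝ (fderiv ℝ f) a b b + fderiv ℝ (fderiv ℝ f) b a a
      = fderiv ℝ f a a + fderiv ℝ f b b := by
  have hα := hasDerivAt_cos_smul_add_sin_smul a b
  have hβ := hasDerivAt_neg_sin_smul_add_cos_smul a b
  have hzero : ∀ᶠ θ in 𝓝 0, fderiv ℝ f (cos θ • a + sin θ • b) (-sin θ • a + cos θ • b)
      - fderiv ℝ f (-sin θ • a + cos θ • b) (cos θ • a + sin θ • b) = 0 :=
    ((by fun_prop : Continuous fun θ : ℝ => (cos θ • a + sin θ • b, -sin θ • a + cos θ • b))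
      |>.continuousAt.eventually_of_nhdsWithin (by simp)
        (rotation_mem_orthonormalPairsR3 hab) hcomm).mono fun s hs => sub_eq_zero.2 hs
  have := (((ha.hasFDerivAt_fderiv.comp_hasDerivAt_of_eq 0 hα (by simp)).clm_apply hβ).sub
    ((hb.hasFDerivAt_fderiv.comp_hasDerivAt_of_eq 0 hβ (by simp)).clm_apply hα)
    ).eq_zero_of_eventually_const hzero
  simp only [sin_zero, neg_zero, zero_smul, cos_zero, one_smul, zero_add, Function.comp_apply,
    add_zero, map_neg, _root_.neg_apply, neg_smul] at this
  linarith

variable {C : Set ℝ³}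

theorem eventually_fderiv_apply_comm_of_rotation_invariant {U : Set (ℝ³ × ℝ³)}
    (hU : ∃ U₀ : Set (ℝ³ × ℝ³), IsOpen U₀ ∧ U = U₀ ∩ OrthonormalPairsR3)
    (hC : IsOpen C) (hf : DifferentiableOn ℝ f C)
    (hUC : ∀ p ∈ U, p.1 ∈ C ∧ p.2 ∈ C)
    (hrot : ∀ v w : ℝ³, (v, w) ∈ U → ∀ θ : ℝ,
      (cos θ • v + sin θ • w, -sin θ • v + cos θ • w) ∈ U →
      f (cos θ • v + sin θ • w) + f (-sin θ • v + cos θ • w) = f v + f w) :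
    ∀ p ∈ U, ∀ᶠ q in 𝓝[OrthonormalPairsR3] p, fderiv ℝ f q.1 q.2 = fderiv ℝ f q.2 q.1 := by
  intro p hp
  obtain ⟨U₀, hU₀, rfl⟩ := hU
  have hnhds : ∀ q ∈ U₀ ∩ OrthonormalPairsR3,
      U₀ ∩ OrthonormalPairsR3 ∈ 𝓝[OrthonormalPairsR3] q :=
    fun q hq => mem_nhdsWithin.2 ⟨U₀, hU₀, hq.1, subset_rfl⟩
  filter_upwards [hnhds p hp] with q hq
  exact fderiv_apply_comm_of_rotation_invariant hq.2 (hnhds q hq) (hrot q.1 q.2 hq)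
    (hf.differentiableAt (hC.mem_nhds (hUC q hq).1))
    (hf.differentiableAt (hC.mem_nhds (hUC q hq).2))

theorem eventually_fderiv_fderiv_apply_add_of_comm (hC : IsOpen C) (hf : ContDiffOn ℝ 2 f C)
    (ha : a ∈ C) (hb : b ∈ C)
    (hcomm : ∀ᶠ q in 𝓝[OrthonormalPairsR3] (a, b), fderiv ℝ f q.1 q.2 = fderiv ℝ f q.2 q.1) :
    ∀ᶠ q in 𝓝[OrthonormalPairsR3] (a, b),
      fderiv ℝ (fderiv ℝ f) q.1 q.2 q.2 + fderiv ℝ (fderiv ℝ f) q.2 q.1 q.1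
        = fderiv ℝ f q.1 q.1 + fderiv ℝ f q.2 q.2 := by
  filter_upwards [eventually_eventually_nhdsWithin.2 hcomm, self_mem_nhdsWithin,
    nhdsWithin_le_nhds ((hC.prod hC).mem_nhds ⟨ha, hb⟩)] with q hq hqP hqC
  exact fderiv_fderiv_apply_add_of_comm hqP (hf.contDiffAt (hC.mem_nhds hqC.1))
    (hf.contDiffAt (hC.mem_nhds hqC.2)) hq

theorem fderiv_fderiv_fderiv_apply_normal_eq_zero (hC : IsOpen C) (hf : ContDiffOn ℝ 3 f C)
    (hhom : ∀ x ∈ C, ∀ t : ℝ, 0 < t → f (t • x) = t ^ 2 * f x)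
    (hab : (a, b) ∈ OrthonormalPairsR3) (hac : (a, c) ∈ OrthonormalPairsR3)
    (hbc : (b, c) ∈ OrthonormalPairsR3) (ha : a ∈ C) (hb : b ∈ C)
    (hcomm : ∀ᶠ q in 𝓝[OrthonormalPairsR3] (a, b), fderiv ℝ f q.1 q.2 = fderiv ℝ f q.2 q.1) :
    fderiv ℝ (fderiv ℝ (fderiv ℝ f)) a c b b = 0 := by
  have hfa := hf.contDiffAt (hC.mem_nhds ha)
  have hfb := hf.contDiffAt (hC.mem_nhds hb)
  have hα := hasDerivAt_cos_smul_add_sin_smul a c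
  have hzero := ((by fun_prop : Continuous fun s : ℝ => (cos s • a + sin s • c, b))
    |>.continuousAt (x := 0) |>.eventually_of_nhdsWithin (by simp)
      (tilt_fst_mem_orthonormalPairsR3 hab hac hbc)
      (eventually_fderiv_fderiv_apply_add_of_comm hC (hf.of_le (by norm_num)) ha hb hcomm))
  have hthird : HasDerivAt (fun s => fderiv ℝ (fderiv ℝ f) (cos s • a + sin s • c) b b)
      (fderiv ℝ (fderiv ℝ (fderiv ℝ f)) a c b b) 0 := by
    simpa using ((hfa.hasFDerivAt_fderiv_fderiv.comp_hasDerivAt_of_eq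
      (E := ℝ³ →L[ℝ] ℝ³ →L[ℝ] ℝ) 0 hα (by simp)).clm_apply (hasDerivAt_const 0 b)).clm_apply
      (hasDerivAt_const 0 b)
  have hsecond : HasDerivAt
      (fun s => fderiv ℝ (fderiv ℝ f) b (cos s • a + sin s • c) (cos s • a + sin s • c))
      (fderiv ℝ (fderiv ℝ f) b c a + fderiv ℝ (fderiv ℝ f) b a c) 0 := by
    simpa using ((fderiv ℝ (fderiv ℝ f) b).hasFDerivAt.comp_hasDerivAt 0 hα).clm_apply hα
  have hfirst : HasDerivAt
      (fun s => fderiv ℝ f (cos s • a + sin s • c) (cos s • a + sin s • c))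
      (fderiv ℝ (fderiv ℝ f) a c a + fderiv ℝ f a c) 0 := by
    simpa using ((hfa.of_le (by norm_num)).hasFDerivAt_fderiv.comp_hasDerivAt_of_eq 0 hα
      (by simp)).clm_apply hα
  have hderiv := ((hthird.add hsecond).sub (hfirst.add_const (fderiv ℝ f b b))
    ).eq_zero_of_eventually_const (hzero.mono fun s hs => sub_eq_zero.2 hs)
  have heuler := fderiv_fderiv_apply_self_of_homogeneous hC (hf.of_le (by norm_num)) hhom ha c
  have hnormal := fderiv_apply_normal_eq_of_comm hab hac hbc (hfb.of_le (by norm_num)) hcomm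
  have hsymm := (hfb.isSymmSndFDerivAt (by simp; norm_num)) a c
  push_cast at heuler
  linarith

theorem fderiv_fderiv_fderiv_eq_zero_of_comm (hC : IsOpen C) (hf : ContDiffOn ℝ 3 f C)
    (hhom : ∀ x ∈ C, ∀ t : ℝ, 0 < t → f (t • x) = t ^ 2 * f x) {x w : ℝ³}
    (hxw : (x, w) ∈ OrthonormalPairsR3) (hx : x ∈ C) (hw : w ∈ C)
    (hcomm : ∀ᶠ q in 𝓝[OrthonormalPairsR3] (x, w), fderiv ℝ f q.1 q.2 = fderiv ℝ f q.2 q.1) :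
    fderiv ℝ (fderiv ℝ (fderiv ℝ f)) x = 0 := by
  obtain ⟨hxu, hwu⟩ := cross_mem_orthonormalPairsR3 hxw
  set u := x ⨯₃ w
  have hfx := hf.contDiffAt (hC.mem_nhds hx)
  have hnormal : ∀ᶠ q in 𝓝[OrthonormalPairsR3] (x, w), ∀ c,
      (q.1, c) ∈ OrthonormalPairsR3 → (q.2, c) ∈ OrthonormalPairsR3 →
      fderiv ℝ (fderiv ℝ (fderiv ℝ f)) q.1 c q.2 q.2 = 0 := by
    filter_upwards [eventually_eventually_nhdsWithin.2 hcomm, self_mem_nhdsWithin,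
      nhdsWithin_le_nhds ((hC.prod hC).mem_nhds ⟨hx, hw⟩)] with q hq hqP hqC c hc₁ hc₂
    exact fderiv_fderiv_fderiv_apply_normal_eq_zero hC hf hhom hqP hc₁ hc₂ hqC.1 hqC.2 hq
  refine trilinear_eq_zero_of_rotation _ hfx.fderiv_fderiv_fderiv_swap_left
    hfx.fderiv_fderiv_fderiv_swap_right hxw hxu hwu (fun h k => ?_) ?_
  · simpa using fderiv_fderiv_fderiv_apply_self_of_homogeneous hC hf hhom hx h k
  · filter_upwards [(by fun_prop : Continuous fun φ : ℝ => (x, cos φ • w + sin φ • u))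
      |>.continuousAt (x := 0) |>.eventually_of_nhdsWithin (by simp)
        (tilt_snd_mem_orthonormalPairsR3 hxw hxu hwu) hnormal] with φ hφ
    refine hφ _ ⟨hxw.1, (rotation_mem_orthonormalPairsR3 hwu φ).2.1, ?_⟩
      (rotation_mem_orthonormalPairsR3 hwu φ)
    simp [dotProduct_add, dotProduct_smul, hxw.2.2, hxu.2.2]

end OrthonormalPairs

theorem third_derivatives_vanish_general (U : Set ((Fin 3 → ℝ) × (Fin 3 → ℝ)))
    (hUopen : ∃ U₀ : Set ((Fin 3 → ℝ) × (Fin 3 → ℝ)),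
      IsOpen U₀ ∧ U = U₀ ∩ OrthonormalPairsR3)
    (C : Set (Fin 3 → ℝ)) (hCopen : IsOpen C)
    (hCsub : (Prod.fst '' U ∪ Prod.snd '' U) ⊆ C)
    (f : (Fin 3 → ℝ) → ℝ) (hf : ContDiffOn ℝ 3 f C)
    (hhom : ∀ x ∈ C, ∀ t : ℝ, 0 < t → f (t • x) = t ^ 2 * f x)
    (hrot : ∀ v w : Fin 3 → ℝ, (v, w) ∈ U → ∀ θ : ℝ,
      (Real.cos θ • v + Real.sin θ • w, -(Real.sin θ) • v + Real.cos θ • w) ∈ U →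
      f (Real.cos θ • v + Real.sin θ • w) + f (-(Real.sin θ) • v + Real.cos θ • w)
        = f v + f w) :
    ∀ x ∈ Prod.fst '' U ∪ Prod.snd '' U, ∀ i j k : Fin 3,
      iteratedFDeriv ℝ 3 f x ![Pi.single i 1, Pi.single j 1, Pi.single k 1] = 0 := by
  have hUC : ∀ p ∈ U, p.1 ∈ C ∧ p.2 ∈ C := fun p hp =>
    ⟨hCsub (.inl ⟨p, hp, rfl⟩), hCsub (.inr ⟨p, hp, rfl⟩)⟩
  have hUP : U ⊆ OrthonormalPairsR3 := by
    obtain ⟨U₀, -, rfl⟩ := hUopen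
    exact Set.inter_subset_right
  have hcomm := eventually_fderiv_apply_comm_of_rotation_invariant hUopen hCopen
    (hf.differentiableOn (by norm_num)) hUC hrot
  intro x hx i j k
  rw [iteratedFDeriv_succ_apply_right, iteratedFDeriv_two_apply]
  suffices fderiv ℝ (fderiv ℝ (fderiv ℝ f)) x = 0 by simp [this]
  rcases hx with ⟨⟨x, w⟩, hxw, rfl⟩ | ⟨⟨w, x⟩, hwx, rfl⟩
  · exact fderiv_fderiv_fderiv_eq_zero_of_comm hCopen hf hhom (hUP hxw) (hUC _ hxw).1
      (hUC _ hxw).2 (hcomm _ hxw)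
  · exact fderiv_fderiv_fderiv_eq_zero_of_comm hCopen hf hhom
      (swap_mem_orthonormalPairsR3 (hUP hwx)) (hUC _ hwx).2 (hUC _ hwx).1
      ((hcomm _ hwx).nhdsWithin_orthonormalPairsR3_swap.mono fun _ hq => hq.symm)

/-- Let `U` be an open subset of the set of ordered pairs of orthonormal vectors of `ℝ³`,
and let `f` be `C³` and positively homogeneous of degree `2` on an open cone containing
`ℙ₁U ∪ ℙ₂U`. If `f(v) + f(w)` is invariant under rotations of the orthonormal pair `(v, w)`
within `U`, then all third-order partial derivatives of `f` vanish on `ℙ₁U ∪ ℙ₂U`. -/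
theorem third_derivatives_vanish (U : Set ((Fin 3 → ℝ) × (Fin 3 → ℝ)))
    (hUopen : ∃ U₀ : Set ((Fin 3 → ℝ) × (Fin 3 → ℝ)),
      IsOpen U₀ ∧ U = U₀ ∩ OrthonormalPairsR3)
    (C : Set (Fin 3 → ℝ)) (hCopen : IsOpen C)
    (hCcone : ∀ x ∈ C, ∀ t : ℝ, 0 < t → t • x ∈ C)
    (hCsub : (Prod.fst '' U ∪ Prod.snd '' U) ⊆ C)
    (f : (Fin 3 → ℝ) → ℝ) (hf : ContDiffOn ℝ 3 f C)
    (hhom : ∀ x ∈ C, ∀ t : ℝ, 0 < t → f (t • x) = t ^ 2 * f x)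
    (hrot : ∀ v w : Fin 3 → ℝ, (v, w) ∈ U → ∀ θ : ℝ,
      (Real.cos θ • v + Real.sin θ • w, -(Real.sin θ) • v + Real.cos θ • w) ∈ U →
      f (Real.cos θ • v + Real.sin θ • w) + f (-(Real.sin θ) • v + Real.cos θ • w)
        = f v + f w) :
    ∀ x ∈ Prod.fst '' U ∪ Prod.snd '' U, ∀ i j k : Fin 3,
      iteratedFDeriv ℝ 3 f x ![Pi.single i 1, Pi.single j 1, Pi.single k 1] = 0 :=
  third_derivatives_vanish_general U hUopen C hCopen hCsub f hf hhom hrot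
end

section
/- Let U be an open subset of the set of ordered pairs (v, w) of orthonormal vectors in ℝ³, and let f : ℝ³ → ℝ be C² on an open neighbourhood of ℙ₁U ∪ ℙ₂U. Suppose w·∇f(v) − v·∇f(w) = 0 for every (v, w) ∈ U. Then for every (v, w) ∈ U, ∑_{i,j} (v × w)_i w_j ∂²f(v)/∂v_i∂v_j = (v × w)·∇f(w), and symmetrically ∑_{i,j} (v × w)_i v_j ∂²f(w)/∂w_i∂w_j = (v × w)·∇f(v). -/
open Matrix

open Filter Topology

/-! Rotating `v` towards `v × w` along a great circle, with `w` fixed, keeps the pair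
orthonormal, so the first-order identity holds along this curve; differentiating it at `t = 0`
gives the first identity, because the velocity of the curve at `0` is `v × w`. The second one is
the first for the pair `(w, v)`, as `w × v = -(v × w)`. -/

section Differentiation

variable {E F : Type*} [NormedAddCommGroup E] [NormedSpace ℝ E]
  [NormedAddCommGroup F] [NormedSpace ℝ F]

theorem fderiv_fderiv_apply_eq_of_eventually_eq_along {f : E → F} {g : ℝ → E} {x y e : E}
    (hf : DifferentiableAt ℝ (fderiv ℝ f) x) (hg0 : g 0 = x) (hg : HasDerivAt g e 0)
    (hfg : ∀ᶠ t in 𝓝 0, fderiv ℝ f (g t) y = fderiv ℝ f y (g t)) :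
    fderiv ℝ (fderiv ℝ f) x e y = fderiv ℝ f y e := by
  subst hg0
  have hlhs : HasDerivAt (fun t => fderiv ℝ f (g t) y) (fderiv ℝ (fderiv ℝ f) (g 0) e y) 0 :=
    (ContinuousLinearMap.apply ℝ F y).hasFDerivAt.comp_hasDerivAt 0
      (hf.hasFDerivAt.comp_hasDerivAt 0 hg)
  have hrhs : HasDerivAt (fun t => fderiv ℝ f y (g t)) (fderiv ℝ f y e) 0 :=
    (fderiv ℝ f y).hasFDerivAt.comp_hasDerivAt 0 hg
  exact hlhs.unique (hrhs.congr_of_eventuallyEq hfg)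

end Differentiation

section GreatCircle

noncomputable def greatCircle {E : Type*} [AddCommGroup E] [Module ℝ E] (a p : E) (t : ℝ) : E :=
  Real.cos t • a + Real.sin t • p

variable {E : Type*} [NormedAddCommGroup E] [NormedSpace ℝ E]

@[simp]
theorem greatCircle_zero (a p : E) : greatCircle a p 0 = a := by
  simp [greatCircle]

theorem continuous_greatCircle (a p : E) : Continuous (greatCircle a p) :=
  (Real.continuous_cos.smul continuous_const).add (Real.continuous_sin.smul continuous_const)

theorem hasDerivAt_greatCircle_zero (a p : E) : HasDerivAt (greatCircle a p) p 0 := by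
  refine (((Real.hasDerivAt_cos 0).smul_const a).add
    ((Real.hasDerivAt_sin 0).smul_const p)).congr_deriv ?_
  simp

theorem greatCircle_dotProduct_self {n : Type*} [Fintype n] {a p : n → ℝ}
    (ha : a ⬝ᵥ a = 1) (hp : p ⬝ᵥ p = 1) (hap : a ⬝ᵥ p = 0) (t : ℝ) :
    greatCircle a p t ⬝ᵥ greatCircle a p t = 1 := by
  simp only [greatCircle, add_dotProduct, dotProduct_add, smul_dotProduct, dotProduct_smul,
    smul_eq_mul, ha, hp, hap, dotProduct_comm p a]
  nlinarith [Real.sin_sq_add_cos_sq t]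

theorem greatCircle_dotProduct {n : Type*} [Fintype n] {a p b : n → ℝ}
    (hab : a ⬝ᵥ b = 0) (hpb : p ⬝ᵥ b = 0) (t : ℝ) : greatCircle a p t ⬝ᵥ b = 0 := by
  simp [greatCircle, add_dotProduct, hab, hpb]

end GreatCircle

theorem mem_orthonormalPairsR3_swap {v w : Fin 3 → ℝ} :
    (w, v) ∈ OrthonormalPairsR3 ↔ (v, w) ∈ OrthonormalPairsR3 := by
  simp only [OrthonormalPairsR3, Set.mem_ofPred_eq, dotProduct_comm w v]
  tauto

theorem crossProduct_dotProduct_self_of_mem_orthonormalPairsR3 {v w : Fin 3 → ℝ}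
    (h : (v, w) ∈ OrthonormalPairsR3) : v ⨯₃ w ⬝ᵥ v ⨯₃ w = 1 := by
  obtain ⟨hv, hw, hvw⟩ := h
  rw [cross_dot_cross, hv, hw, dotProduct_comm w v, hvw]
  ring

theorem greatCircle_crossProduct_mem_orthonormalPairsR3 {v w : Fin 3 → ℝ}
    (h : (v, w) ∈ OrthonormalPairsR3) (t : ℝ) :
    (greatCircle v (v ⨯₃ w) t, w) ∈ OrthonormalPairsR3 :=
  ⟨greatCircle_dotProduct_self h.1 (crossProduct_dotProduct_self_of_mem_orthonormalPairsR3 h)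
      (dot_self_cross v w) t,
    h.2.1,
    greatCircle_dotProduct h.2.2 (by rw [dotProduct_comm, dot_cross_self]) t⟩

theorem fderiv_fderiv_crossProduct_eq {f : (Fin 3 → ℝ) → ℝ} {v w : Fin 3 → ℝ}
    (h : (v, w) ∈ OrthonormalPairsR3) (hf : DifferentiableAt ℝ (fderiv ℝ f) v)
    (hfirst : ∀ᶠ x in 𝓝 v, (x, w) ∈ OrthonormalPairsR3 → fderiv ℝ f x w = fderiv ℝ f w x) :
    fderiv ℝ (fderiv ℝ f) v (v ⨯₃ w) w = fderiv ℝ f w (v ⨯₃ w) := by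
  have hcurve : Tendsto (greatCircle v (v ⨯₃ w)) (𝓝 0) (𝓝 v) := by
    simpa using (continuous_greatCircle v (v ⨯₃ w)).tendsto 0
  refine fderiv_fderiv_apply_eq_of_eventually_eq_along hf (greatCircle_zero _ _)
    (hasDerivAt_greatCircle_zero _ _) ?_
  filter_upwards [hcurve.eventually hfirst] with t ht
  exact ht (greatCircle_crossProduct_mem_orthonormalPairsR3 h t)

/-- Let `U` be an open subset of the set of ordered pairs of orthonormal vectors of `ℝ³`,
and let `f` be `C²` on an open neighbourhood of `ℙ₁U ∪ ℙ₂U` satisfying the first-order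
identity `w·∇f(v) − v·∇f(w) = 0` on `U`. Then for every `(v, w) ∈ U`,
`∑ᵢⱼ (v×w)ᵢ wⱼ ∂²f(v)/∂vᵢ∂vⱼ = (v×w)·∇f(w)` and symmetrically
`∑ᵢⱼ (v×w)ᵢ vⱼ ∂²f(w)/∂wᵢ∂wⱼ = (v×w)·∇f(v)` (Eqs. (32)–(33) of the paper). -/
theorem second_order_rotation_identities (U : Set ((Fin 3 → ℝ) × (Fin 3 → ℝ)))
    (hUopen : ∃ U₀ : Set ((Fin 3 → ℝ) × (Fin 3 → ℝ)),
      IsOpen U₀ ∧ U = U₀ ∩ OrthonormalPairsR3)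
    (W : Set (Fin 3 → ℝ)) (hWopen : IsOpen W)
    (hWsub : (Prod.fst '' U ∪ Prod.snd '' U) ⊆ W)
    (f : (Fin 3 → ℝ) → ℝ) (hf : ContDiffOn ℝ 2 f W)
    (hfirst : ∀ v w : Fin 3 → ℝ, (v, w) ∈ U →
      fderiv ℝ f v w - fderiv ℝ f w v = 0) :
    ∀ v w : Fin 3 → ℝ, (v, w) ∈ U →
      iteratedFDeriv ℝ 2 f v ![crossProduct v w, w]
          = fderiv ℝ f w (crossProduct v w) ∧
      iteratedFDeriv ℝ 2 f w ![crossProduct v w, v]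
          = fderiv ℝ f v (crossProduct v w) := by
  obtain ⟨U₀, hU₀, rfl⟩ := hUopen
  intro v w hvw
  have hdiff : ∀ x ∈ W, DifferentiableAt ℝ (fderiv ℝ f) x := fun x hx =>
    ((hf.contDiffAt (hWopen.mem_nhds hx)).fderiv_right (m := 1) le_rfl).differentiableAt
      one_ne_zero
  have hU₀v : ∀ᶠ x in 𝓝 v, (x, w) ∈ U₀ :=
    (continuous_id.prodMk continuous_const).continuousAt.preimage_mem_nhds (hU₀.mem_nhds hvw.1)
  have hU₀w : ∀ᶠ x in 𝓝 w, (v, x) ∈ U₀ :=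
    (continuous_const.prodMk continuous_id).continuousAt.preimage_mem_nhds (hU₀.mem_nhds hvw.1)
  have hv := fderiv_fderiv_crossProduct_eq hvw.2 (hdiff v (hWsub (.inl ⟨_, hvw, rfl⟩))) <| by
    filter_upwards [hU₀v] with x hx hxw using sub_eq_zero.1 (hfirst x w ⟨hx, hxw⟩)
  have hw := fderiv_fderiv_crossProduct_eq (mem_orthonormalPairsR3_swap.2 hvw.2)
    (hdiff w (hWsub (.inr ⟨_, hvw, rfl⟩))) <| by
    filter_upwards [hU₀w] with x hx hxv
    exact (sub_eq_zero.1 (hfirst v x ⟨hx, mem_orthonormalPairsR3_swap.1 hxv⟩)).symm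
  rw [← cross_anticomm, map_neg, map_neg, _root_.neg_apply, neg_inj] at hw
  simp only [iteratedFDeriv_two_apply, Matrix.cons_val_zero, Matrix.cons_val_one]
  exact ⟨hv, hw⟩
end

section
/- Let U be an open subset of the set of ordered pairs (v, w) of orthonormal vectors in ℝ³, and let f : ℝ³ → ℝ be C³ on an open cone containing ℙ₁U ∪ ℙ₂U, satisfying there the radial constraint x·∇f(x) = 2f(x). Suppose that for every (v, w) ∈ U and every θ ∈ ℝ with (v cos θ + w sin θ, −v sin θ + w cos θ) ∈ U, one has f(v cos θ + w sin θ) + f(−v sin θ + w cos θ) = f(v) + f(w). Then for every (v, w) ∈ U, setting u = v × w, ∑_{i,j,k} u_i w_j w_k ∂³f(v)/∂v_i∂v_j∂v_k = 0. -/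
open Matrix

/-!
An identity holding on all of `U` may be differentiated along any curve of orthonormal pairs
through a point of `U`, since such a curve stays in the relatively open set `U` for small times.
Differentiating the rotation invariance in the plane of `(v, w)` gives `Df(v) w = Df(w) v`.
Differentiating this again, once in the plane of `(v, w)` and once with `w` turning towards
`u = v × w`, gives `D²f(v)(w, w) + D²f(w)(v, v) = 2 f(v) + 2 f(w)` (by the radial constraint) and
`D²f(w)(u, v) = Df(v) u`. Differentiating the former with `v` turning towards `u` yields
`D³f(v)(u, w, w) + 2 D²f(w)(u, v) = 2 Df(v) u`, and the latter cancels the last two terms.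
-/

open Filter Topology

section Rotation

variable {E : Type*}

section Module

variable [AddCommGroup E] [Module ℝ E]

noncomputable def rotate (a b : E) (t : ℝ) : E :=
  Real.cos t • a + Real.sin t • b

@[simp]
lemma rotate_zero (a b : E) : rotate a b 0 = a := by
  simp [rotate]

lemma rotate_neg_right (a b : E) (t : ℝ) : rotate b (-a) t = -Real.sin t • a + Real.cos t • b := by
  simp only [rotate, smul_neg, neg_smul]
  abel

end Module

variable [NormedAddCommGroup E] [NormedSpace ℝ E]

lemma hasDerivAt_rotate (a b : E) : HasDerivAt (rotate a b) b 0 := by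
  convert ((Real.hasDerivAt_cos 0).smul_const a).add ((Real.hasDerivAt_sin 0).smul_const b) using 1
  · rfl
  · simp

lemma hasDerivAt_comp_rotate {F : Type*} [NormedAddCommGroup F] [NormedSpace ℝ F] {g : E → F}
    {a : E} (b : E) (hg : DifferentiableAt ℝ g a) :
    HasDerivAt (fun t => g (rotate a b t)) (fderiv ℝ g a b) 0 :=
  hg.hasFDerivAt.comp_hasDerivAt_of_eq 0 (hasDerivAt_rotate a b) (rotate_zero a b).symm

end Rotation

section DotProduct

variable {n : Type*} [Fintype n] {a b c : n → ℝ}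

lemma rotate_dotProduct_self (ha : a ⬝ᵥ a = 1) (hb : b ⬝ᵥ b = 1) (hab : a ⬝ᵥ b = 0) (t : ℝ) :
    rotate a b t ⬝ᵥ rotate a b t = 1 := by
  simp only [rotate, dotProduct_add, add_dotProduct, dotProduct_smul, smul_dotProduct,
    smul_eq_mul, ha, hb, hab, dotProduct_comm b a]
  nlinarith [Real.sin_sq_add_cos_sq t]

lemma dotProduct_rotate (hca : c ⬝ᵥ a = 0) (hcb : c ⬝ᵥ b = 0) (t : ℝ) :
    c ⬝ᵥ rotate a b t = 0 := by
  simp [rotate, dotProduct_add, hca, hcb]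

lemma rotate_dotProduct_rotate_neg (ha : a ⬝ᵥ a = 1) (hb : b ⬝ᵥ b = 1) (hab : a ⬝ᵥ b = 0)
    (t : ℝ) : rotate a b t ⬝ᵥ rotate b (-a) t = 0 := by
  simp only [rotate, dotProduct_add, add_dotProduct, dotProduct_smul, smul_dotProduct,
    dotProduct_neg, smul_eq_mul, ha, hb, hab, dotProduct_comm b a]
  ring

end DotProduct

section OrthonormalPairs

variable {u v w : Fin 3 → ℝ}

lemma rotate_mem_orthonormalPairsR3 (hvw : (v, w) ∈ OrthonormalPairsR3) (t : ℝ) :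
    (rotate v w t, rotate w (-v) t) ∈ OrthonormalPairsR3 := by
  obtain ⟨hv, hw, hvw⟩ := hvw
  have hwv : w ⬝ᵥ -v = 0 := by rw [dotProduct_neg, dotProduct_comm, hvw, neg_zero]
  exact ⟨rotate_dotProduct_self hv hw hvw t,
    rotate_dotProduct_self hw (by rwa [dotProduct_neg, neg_dotProduct, neg_neg]) hwv t,
    rotate_dotProduct_rotate_neg hv hw hvw t⟩

lemma mk_rotate_mem_orthonormalPairsR3 (hvw : (v, w) ∈ OrthonormalPairsR3)
    (hvu : (v, u) ∈ OrthonormalPairsR3) (hwu : (w, u) ∈ OrthonormalPairsR3) (t : ℝ) :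
    (v, rotate w u t) ∈ OrthonormalPairsR3 :=
  ⟨hvw.1, rotate_dotProduct_self hwu.1 hwu.2.1 hwu.2.2 t, dotProduct_rotate hvw.2.2 hvu.2.2 t⟩

lemma rotate_mk_mem_orthonormalPairsR3 (hvw : (v, w) ∈ OrthonormalPairsR3)
    (hvu : (v, u) ∈ OrthonormalPairsR3) (hwu : (w, u) ∈ OrthonormalPairsR3) (t : ℝ) :
    (rotate v u t, w) ∈ OrthonormalPairsR3 := by
  refine ⟨rotate_dotProduct_self hvu.1 hvu.2.1 hvu.2.2 t, hvw.2.1, ?_⟩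
  change rotate v u t ⬝ᵥ w = 0
  rw [dotProduct_comm]
  exact dotProduct_rotate (by rw [dotProduct_comm]; exact hvw.2.2) hwu.2.2 t

lemma crossProduct_mem_orthonormalPairsR3 (hvw : (v, w) ∈ OrthonormalPairsR3) :
    (v, crossProduct v w) ∈ OrthonormalPairsR3 ∧ (w, crossProduct v w) ∈ OrthonormalPairsR3 := by
  obtain ⟨hv, hw, hvw⟩ := hvw
  have hu : crossProduct v w ⬝ᵥ crossProduct v w = 1 := by
    rw [cross_dot_cross, hv, hw, dotProduct_comm w v, hvw]
    norm_num
  exact ⟨⟨hv, hu, dot_self_cross v w⟩, ⟨hw, hu, dot_cross_self v w⟩⟩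

end OrthonormalPairs

section ContDiff

variable {𝕜 E F : Type*} [NontriviallyNormedField 𝕜] [NormedAddCommGroup E] [NormedSpace 𝕜 E]
  [NormedAddCommGroup F] [NormedSpace 𝕜 F] {f : E → F} {x : E} {n : WithTop ℕ∞}

lemma ContDiffAt.differentiableAt_fderiv (hf : ContDiffAt 𝕜 n f x) (hn : 2 ≤ n) :
    DifferentiableAt 𝕜 (fderiv 𝕜 f) x :=
  (hf.fderiv_right (m := 1) (by simpa [one_add_one_eq_two] using hn)).differentiableAt one_ne_zero

lemma ContDiffAt.differentiableAt_fderiv_fderiv (hf : ContDiffAt 𝕜 n f x) (hn : 3 ≤ n) :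
    DifferentiableAt 𝕜 (fderiv 𝕜 (fderiv 𝕜 f)) x :=
  (hf.fderiv_right (m := 2) (by simpa [two_add_one_eq_three] using hn)).differentiableAt_fderiv
    le_rfl

end ContDiff

lemma ContinuousAt.eventually_mem_inter {X Y : Type*} [TopologicalSpace X] [TopologicalSpace Y]
    {γ : X → Y} {x : X} {U₀ S : Set Y} (hγ : ContinuousAt γ x) (hU₀ : IsOpen U₀) (h₀ : γ x ∈ U₀)
    (hS : ∀ y, γ y ∈ S) : ∀ᶠ y in 𝓝 x, γ y ∈ U₀ ∩ S :=
  (hγ.eventually_mem (hU₀.mem_nhds h₀)).mono fun y hy => ⟨hy, hS y⟩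

section RotationIdentities

variable {U₀ : Set ((Fin 3 → ℝ) × (Fin 3 → ℝ))} {f : (Fin 3 → ℝ) → ℝ} {u v w : Fin 3 → ℝ}

lemma eventually_rotate_mem (hU₀ : IsOpen U₀) (hvw : (v, w) ∈ U₀ ∩ OrthonormalPairsR3) :
    ∀ᶠ t in 𝓝 0, (rotate v w t, rotate w (-v) t) ∈ U₀ ∩ OrthonormalPairsR3 :=
  ((hasDerivAt_rotate v w).continuousAt.prodMk (hasDerivAt_rotate w (-v)).continuousAt
    ).eventually_mem_inter hU₀ (by simpa using hvw.1) (rotate_mem_orthonormalPairsR3 hvw.2)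

lemma fderiv_apply_comm_of_rotation_invariant_s9 (hU₀ : IsOpen U₀)
    (hrot : ∀ v w, (v, w) ∈ U₀ ∩ OrthonormalPairsR3 → ∀ θ,
      (rotate v w θ, rotate w (-v) θ) ∈ U₀ ∩ OrthonormalPairsR3 →
        f (rotate v w θ) + f (rotate w (-v) θ) = f v + f w)
    (hvw : (v, w) ∈ U₀ ∩ OrthonormalPairsR3) (hv : DifferentiableAt ℝ f v)
    (hw : DifferentiableAt ℝ f w) : fderiv ℝ f v w = fderiv ℝ f w v := by
  have hconst : (fun t => f (rotate v w t) + f (rotate w (-v) t)) =ᶠ[𝓝 0] fun _ => f v + f w :=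
    (eventually_rotate_mem hU₀ hvw).mono fun t ht => hrot v w hvw t ht
  have h := ((hasDerivAt_comp_rotate w hv).add (hasDerivAt_comp_rotate (-v) hw)).unique
    ((hasDerivAt_const 0 (f v + f w)).congr_of_eventuallyEq hconst)
  rw [map_neg] at h
  linarith

lemma fderiv_fderiv_add_of_fderiv_apply_comm (hU₀ : IsOpen U₀)
    (hG : ∀ v w, (v, w) ∈ U₀ ∩ OrthonormalPairsR3 → fderiv ℝ f v w = fderiv ℝ f w v)
    (hvw : (v, w) ∈ U₀ ∩ OrthonormalPairsR3) (hv : DifferentiableAt ℝ (fderiv ℝ f) v)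
    (hw : DifferentiableAt ℝ (fderiv ℝ f) w) :
    fderiv ℝ (fderiv ℝ f) v w w + fderiv ℝ (fderiv ℝ f) w v v =
      fderiv ℝ f v v + fderiv ℝ f w w := by
  have hcomm : (fun t => fderiv ℝ f (rotate v w t) (rotate w (-v) t)) =ᶠ[𝓝 0]
      fun t => fderiv ℝ f (rotate w (-v) t) (rotate v w t) :=
    (eventually_rotate_mem hU₀ hvw).mono fun t ht => hG _ _ ht
  have h := ((hasDerivAt_comp_rotate w hv).clm_apply (hasDerivAt_rotate w (-v))).unique
    (((hasDerivAt_comp_rotate (-v) hw).clm_apply (hasDerivAt_rotate v w)).congr_of_eventuallyEq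
      hcomm)
  rw [rotate_zero, rotate_zero, map_neg, map_neg, _root_.neg_apply] at h
  linarith

lemma fderiv_fderiv_apply_eq_of_fderiv_apply_comm (hU₀ : IsOpen U₀)
    (hG : ∀ v w, (v, w) ∈ U₀ ∩ OrthonormalPairsR3 → fderiv ℝ f v w = fderiv ℝ f w v)
    (hvw : (v, w) ∈ U₀ ∩ OrthonormalPairsR3) (hvu : (v, u) ∈ OrthonormalPairsR3)
    (hwu : (w, u) ∈ OrthonormalPairsR3) (hw : DifferentiableAt ℝ (fderiv ℝ f) w) :
    fderiv ℝ (fderiv ℝ f) w u v = fderiv ℝ f v u := by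
  have hmem : ∀ᶠ t in 𝓝 0, (v, rotate w u t) ∈ U₀ ∩ OrthonormalPairsR3 :=
    (continuousAt_const.prodMk (hasDerivAt_rotate w u).continuousAt).eventually_mem_inter hU₀
      (by simpa using hvw.1) (mk_rotate_mem_orthonormalPairsR3 hvw.2 hvu hwu)
  have hcomm : (fun t => fderiv ℝ f (rotate w u t) v) =ᶠ[𝓝 0]
      fun t => fderiv ℝ f v (rotate w u t) :=
    hmem.mono fun t ht => (hG _ _ ht).symm
  have h := ((hasDerivAt_comp_rotate u hw).clm_apply (hasDerivAt_const 0 v)).unique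
    ((hasDerivAt_comp_rotate u (fderiv ℝ f v).differentiableAt).congr_of_eventuallyEq hcomm)
  simpa using h

lemma fderiv_fderiv_fderiv_add_of_fderiv_fderiv_add (hU₀ : IsOpen U₀)
    (hF : ∀ v w, (v, w) ∈ U₀ ∩ OrthonormalPairsR3 →
      fderiv ℝ (fderiv ℝ f) v w w + fderiv ℝ (fderiv ℝ f) w v v = 2 * f v + 2 * f w)
    (hvw : (v, w) ∈ U₀ ∩ OrthonormalPairsR3) (hvu : (v, u) ∈ OrthonormalPairsR3)
    (hwu : (w, u) ∈ OrthonormalPairsR3) (hv : DifferentiableAt ℝ f v)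
    (hv₂ : DifferentiableAt ℝ (fderiv ℝ (fderiv ℝ f)) v) :
    fderiv ℝ (fderiv ℝ (fderiv ℝ f)) v u w w + fderiv ℝ (fderiv ℝ f) w u v +
      fderiv ℝ (fderiv ℝ f) w v u = 2 * fderiv ℝ f v u := by
  have hmem : ∀ᶠ t in 𝓝 0, (rotate v u t, w) ∈ U₀ ∩ OrthonormalPairsR3 :=
    ((hasDerivAt_rotate v u).continuousAt.prodMk continuousAt_const).eventually_mem_inter hU₀
      (by simpa using hvw.1) (rotate_mk_mem_orthonormalPairsR3 hvw.2 hvu hwu)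
  have hsum : (fun t => fderiv ℝ (fderiv ℝ f) (rotate v u t) w w +
        fderiv ℝ (fderiv ℝ f) w (rotate v u t) (rotate v u t)) =ᶠ[𝓝 0]
      fun t => 2 * f (rotate v u t) + 2 * f w :=
    hmem.mono fun t ht => hF _ _ ht
  have hd₁ : HasDerivAt (fun t => fderiv ℝ (fderiv ℝ f) (rotate v u t) w w)
      (fderiv ℝ (fderiv ℝ (fderiv ℝ f)) v u w w) 0 := by
    simpa using ((hasDerivAt_comp_rotate (g := fderiv ℝ (fderiv ℝ f)) u hv₂).clm_apply
      (hasDerivAt_const (0 : ℝ) w)).clm_apply (hasDerivAt_const (0 : ℝ) w)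
  have hd₂ : HasDerivAt (fun t => fderiv ℝ (fderiv ℝ f) w (rotate v u t) (rotate v u t))
      (fderiv ℝ (fderiv ℝ f) w u v + fderiv ℝ (fderiv ℝ f) w v u) 0 := by
    simpa using (hasDerivAt_comp_rotate u (fderiv ℝ (fderiv ℝ f) w).differentiableAt).clm_apply
      (hasDerivAt_rotate v u)
  have h := (hd₁.add hd₂).unique ((((hasDerivAt_comp_rotate u hv).const_mul 2).add
    (hasDerivAt_const 0 (2 * f w))).congr_of_eventuallyEq hsum)
  linarith

end RotationIdentities

theorem third_order_identity_general (U : Set ((Fin 3 → ℝ) × (Fin 3 → ℝ)))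
    (hUopen : ∃ U₀ : Set ((Fin 3 → ℝ) × (Fin 3 → ℝ)),
      IsOpen U₀ ∧ U = U₀ ∩ OrthonormalPairsR3)
    (C : Set (Fin 3 → ℝ)) (hCopen : IsOpen C)
    (hCsub : (Prod.fst '' U ∪ Prod.snd '' U) ⊆ C)
    (f : (Fin 3 → ℝ) → ℝ) (hf : ContDiffOn ℝ 3 f C)
    (hradial : ∀ x ∈ C, fderiv ℝ f x x = 2 * f x)
    (hrot : ∀ v w : Fin 3 → ℝ, (v, w) ∈ U → ∀ θ : ℝ,
      (Real.cos θ • v + Real.sin θ • w, -(Real.sin θ) • v + Real.cos θ • w) ∈ U →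
      f (Real.cos θ • v + Real.sin θ • w) + f (-(Real.sin θ) • v + Real.cos θ • w)
        = f v + f w) :
    ∀ v w : Fin 3 → ℝ, (v, w) ∈ U →
      iteratedFDeriv ℝ 3 f v ![crossProduct v w, w, w] = 0 := by
  obtain ⟨U₀, hU₀, rfl⟩ := hUopen
  have hmem : ∀ v w, (v, w) ∈ U₀ ∩ OrthonormalPairsR3 → v ∈ C ∧ w ∈ C := fun v w hvw =>
    ⟨hCsub (Or.inl ⟨(v, w), hvw, rfl⟩), hCsub (Or.inr ⟨(v, w), hvw, rfl⟩)⟩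
  have hf₃ : ∀ x ∈ C, ContDiffAt ℝ 3 f x := fun x hx => hf.contDiffAt (hCopen.mem_nhds hx)
  have hG : ∀ v w, (v, w) ∈ U₀ ∩ OrthonormalPairsR3 → fderiv ℝ f v w = fderiv ℝ f w v :=
    fun v w hvw => fderiv_apply_comm_of_rotation_invariant_s9 hU₀
      (fun v w hvw θ => by rw [rotate_neg_right]; exact hrot v w hvw θ) hvw
      ((hf₃ v (hmem v w hvw).1).differentiableAt (by norm_num))
      ((hf₃ w (hmem v w hvw).2).differentiableAt (by norm_num))
  have hF : ∀ v w, (v, w) ∈ U₀ ∩ OrthonormalPairsR3 →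
      fderiv ℝ (fderiv ℝ f) v w w + fderiv ℝ (fderiv ℝ f) w v v = 2 * f v + 2 * f w := by
    intro v w hvw
    obtain ⟨hv, hw⟩ := hmem v w hvw
    rw [← hradial v hv, ← hradial w hw]
    exact fderiv_fderiv_add_of_fderiv_apply_comm hU₀ hG hvw
      ((hf₃ v hv).differentiableAt_fderiv (by norm_num))
      ((hf₃ w hw).differentiableAt_fderiv (by norm_num))
  intro v w hvw
  obtain ⟨hv, hw⟩ := hmem v w hvw
  obtain ⟨hvu, hwu⟩ := crossProduct_mem_orthonormalPairsR3 hvw.2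
  have h₃ := fderiv_fderiv_fderiv_add_of_fderiv_fderiv_add hU₀ hF hvw hvu hwu
    ((hf₃ v hv).differentiableAt (by norm_num)) ((hf₃ v hv).differentiableAt_fderiv_fderiv le_rfl)
  have h₂ := fderiv_fderiv_apply_eq_of_fderiv_apply_comm hU₀ hG hvw hvu hwu
    ((hf₃ w hw).differentiableAt_fderiv (by norm_num))
  have hsymm := (hf₃ w hw).isSymmSndFDerivAt (by norm_num) v (crossProduct v w)
  rw [iteratedFDeriv_succ_apply_right, iteratedFDeriv_two_apply]
  change fderiv ℝ (fderiv ℝ (fderiv ℝ f)) v (crossProduct v w) w w = 0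
  linarith

/-- Let `U` be an open subset of the set of ordered pairs of orthonormal vectors of `ℝ³`,
and let `f` be `C³` on an open cone containing `ℙ₁U ∪ ℙ₂U`, satisfying there the radial
constraint `x·∇f(x) = 2f(x)`. If `f(v) + f(w)` is invariant under rotations of the
orthonormal pair `(v, w)` within `U`, then for every `(v, w) ∈ U`, setting `u = v × w`,
`∑ᵢⱼₖ uᵢ wⱼ wₖ ∂³f(v)/∂vᵢ∂vⱼ∂vₖ = 0` (Eqs. (35)–(36) of the paper). -/
theorem third_order_identity (U : Set ((Fin 3 → ℝ) × (Fin 3 → ℝ)))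
    (hUopen : ∃ U₀ : Set ((Fin 3 → ℝ) × (Fin 3 → ℝ)),
      IsOpen U₀ ∧ U = U₀ ∩ OrthonormalPairsR3)
    (C : Set (Fin 3 → ℝ)) (hCopen : IsOpen C)
    (hCcone : ∀ x ∈ C, ∀ t : ℝ, 0 < t → t • x ∈ C)
    (hCsub : (Prod.fst '' U ∪ Prod.snd '' U) ⊆ C)
    (f : (Fin 3 → ℝ) → ℝ) (hf : ContDiffOn ℝ 3 f C)
    (hradial : ∀ x ∈ C, fderiv ℝ f x x = 2 * f x)
    (hrot : ∀ v w : Fin 3 → ℝ, (v, w) ∈ U → ∀ θ : ℝ,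
      (Real.cos θ • v + Real.sin θ • w, -(Real.sin θ) • v + Real.cos θ • w) ∈ U →
      f (Real.cos θ • v + Real.sin θ • w) + f (-(Real.sin θ) • v + Real.cos θ • w)
        = f v + f w) :
    ∀ v w : Fin 3 → ℝ, (v, w) ∈ U →
      iteratedFDeriv ℝ 3 f v ![crossProduct v w, w, w] = 0 :=
  third_order_identity_general U hUopen C hCopen hCsub f hf hradial hrot
end

section
/- Let T : ℝ³ × ℝ³ × ℝ³ → ℝ be a symmetric trilinear form, let v ∈ ℝ³ be nonzero, and suppose T(u, w, w) = 0 for all vectors u, w orthogonal to v with u·w = 0. Then T(w, w, w) = 0 for every w orthogonal to v. -/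
open Matrix

/-!
Given `w ⟂ v`, the vector `b = (v ⨯₃ w) / ‖v‖` lies in the plane `v⟂`, is orthogonal to `w` and has
the same length, so `w ± b` are again orthogonal vectors of the plane. Adding the hypothesis at
`(w + b, w - b)` and at `(w - b, w + b)` and expanding by trilinearity and symmetry leaves
`2 T(w,w,w) = 2 T(w,b,b)`, which vanishes by the hypothesis at `(w, b)`.
-/

theorem LinearMap.trilinear_apply_self_eq_zero_of_vanishing_pairs
    {R M : Type*} [Field R] [NeZero (2 : R)] [AddCommGroup M] [Module R M]
    (T : M →ₗ[R] M →ₗ[R] M →ₗ[R] R)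
    (hsymm₁₂ : ∀ a b c : M, T a b c = T b a c) (hsymm₂₃ : ∀ a b c : M, T a b c = T a c b)
    {a b : M} (habb : T a b b = 0)
    (hadd : T (a + b) (a - b) (a - b) = 0) (hsub : T (a - b) (a + b) (a + b) = 0) :
    T a a a = 0 := by
  simp only [map_add, map_sub, LinearMap.add_apply, LinearMap.sub_apply] at hadd hsub
  have htwo : 2 * T a a a = 0 := by
    linear_combination hadd + hsub + 2 * hsymm₂₃ b b a + 4 * hsymm₁₂ b a b + 2 * habb
  exact (mul_eq_zero.mp htwo).resolve_left two_ne_zero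

theorem add_dotProduct_sub {R n : Type*} [CommRing R] [Fintype n] (a b : n → R) :
    (a + b) ⬝ᵥ (a - b) = a ⬝ᵥ a - b ⬝ᵥ b := by
  rw [add_dotProduct, dotProduct_sub, dotProduct_sub, dotProduct_comm b a]
  ring

theorem exists_orthogonal_dotProduct_self_eq {v w : Fin 3 → ℝ} (hv : v ≠ 0) (hw : w ⬝ᵥ v = 0) :
    ∃ b : Fin 3 → ℝ, b ⬝ᵥ v = 0 ∧ b ⬝ᵥ w = 0 ∧ b ⬝ᵥ b = w ⬝ᵥ w := by
  have hvv : 0 < v ⬝ᵥ v := by simpa using dotProduct_star_self_pos_iff.mpr hv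
  refine ⟨(√(v ⬝ᵥ v))⁻¹ • v ⨯₃ w, ?_, ?_, ?_⟩
  · rw [smul_dotProduct, dotProduct_comm (v ⨯₃ w), dot_self_cross, smul_zero]
  · rw [smul_dotProduct, dotProduct_comm (v ⨯₃ w), dot_cross_self, smul_zero]
  · rw [smul_dotProduct, dotProduct_smul, cross_dot_cross, dotProduct_comm v w, hw, smul_smul,
      smul_eq_mul, ← mul_inv, Real.mul_self_sqrt hvv.le]
    field_simp
    ring

/-- If a symmetric trilinear form `T` on `ℝ³` satisfies `T(u, w, w) = 0` for all `u, w`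
orthogonal to a nonzero vector `v` with `u·w = 0`, then `T(w, w, w) = 0` for every `w`
orthogonal to `v` (the step from Eq. (37) to Eq. (38) in the paper). -/
theorem diagonal_vanishes_on_orthogonal_plane
    (T : (Fin 3 → ℝ) →ₗ[ℝ] (Fin 3 → ℝ) →ₗ[ℝ] (Fin 3 → ℝ) →ₗ[ℝ] ℝ)
    (hsymm₁₂ : ∀ a b c : Fin 3 → ℝ, T a b c = T b a c)
    (hsymm₂₃ : ∀ a b c : Fin 3 → ℝ, T a b c = T a c b)
    (v : Fin 3 → ℝ) (hv : v ≠ 0)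
    (h : ∀ u w : Fin 3 → ℝ, u ⬝ᵥ v = 0 → w ⬝ᵥ v = 0 → u ⬝ᵥ w = 0 → T u w w = 0) :
    ∀ w : Fin 3 → ℝ, w ⬝ᵥ v = 0 → T w w w = 0 := by
  intro w hw
  obtain ⟨b, hbv, hbw, hbb⟩ := exists_orthogonal_dotProduct_self_eq hv hw
  have hwb : w ⬝ᵥ b = 0 := by rwa [dotProduct_comm]
  have hadd : (w + b) ⬝ᵥ v = 0 := by rw [add_dotProduct, hw, hbv, add_zero]
  have hsub : (w - b) ⬝ᵥ v = 0 := by rw [sub_dotProduct, hw, hbv, sub_zero]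
  have hperp : (w + b) ⬝ᵥ (w - b) = 0 := by rw [add_dotProduct_sub, hbb, sub_self]
  exact T.trilinear_apply_self_eq_zero_of_vanishing_pairs hsymm₁₂ hsymm₂₃
    (h w b hw hbv hwb) (h _ _ hadd hsub hperp)
    (h _ _ hsub hadd (by rwa [dotProduct_comm]))
end

section
/- Let μ be a real-valued function on the orthogonal projections of ℂ^N satisfying: (i) μ(E) ≥ 0 for every orthogonal projection E; (ii) μ(1) = 1; (iii) μ(E₁) + μ(E₂) = μ(E₁ + E₂) for every pair of commuting orthogonal projections E₁, E₂ with E₁E₂ = 0; and (iv) there exist a Hermitian operator η and a real constant K with μ(P) = tr(ηP) + K for every rank-1 orthogonal projection P. Then ρ := η + K·1 is positive semidefinite with tr ρ = 1, and μ(E) = tr(ρE) for every orthogonal projection E. -/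
/-!
A Hermitian idempotent has eigenvalues `0` and `1`, so it is the sum of the mutually orthogonal
rank-one projections `v v†` onto its unit eigenvectors with eigenvalue `1`. Additivity therefore
reduces `μ` to rank-one projections, where `tr(ηP) + K = ⟨v, ρ v⟩` because `tr P = ⟨v, v⟩ = 1`;
this gives `μ(E) = tr(ρE)`. Taking `E = 1` yields `tr ρ = 1`, and `⟨v, ρ v⟩ = μ(v v†) ≥ 0` for
unit `v` yields positivity.
-/

open scoped ComplexOrder

def IsProjection {N : ℕ} (E : Matrix (Fin N) (Fin N) ℂ) : Prop :=
  E * E = E ∧ E.IsHermitian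

namespace Matrix

variable {n 𝕜 : Type*} [RCLike 𝕜] [Fintype n]

theorem trace_mul_vecMulVec_star (A : Matrix n n 𝕜) (v : n → 𝕜) :
    (A * vecMulVec v (star v)).trace = star v ⬝ᵥ (A *ᵥ v) := by
  rw [trace_mul_comm, vecMulVec_mul, trace_vecMulVec, dotProduct_comm, ← dotProduct_mulVec]

theorem rank_vecMulVec_star_self {v : n → 𝕜} (hv : v ≠ 0) :
    (vecMulVec v (star v)).rank = 1 := by
  refine le_antisymm (rank_vecMulVec_le _ _) (Nat.one_le_iff_ne_zero.mpr ?_)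
  rw [Matrix.rank, Ne, Submodule.finrank_eq_zero, Submodule.eq_bot_iff]
  intro h
  have hv0 := h _ (LinearMap.mem_range_self _ v)
  rw [mulVecLin_apply, vecMulVec_mulVec, smul_eq_zero, MulOpposite.op_eq_zero_iff,
    dotProduct_star_self_eq_zero, or_self] at hv0
  exact hv hv0

namespace IsHermitian

variable [DecidableEq n] {A : Matrix n n 𝕜}

theorem star_eigenvectorBasis_dotProduct (hA : A.IsHermitian) (i j : n) :
    star ⇑(hA.eigenvectorBasis i) ⬝ᵥ ⇑(hA.eigenvectorBasis j) = if i = j then 1 else 0 := by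
  rw [dotProduct_comm, ← EuclideanSpace.inner_eq_star_dotProduct,
    orthonormal_iff_ite.mp hA.eigenvectorBasis.orthonormal]

theorem eq_sum_eigenvalues_smul_vecMulVec (hA : A.IsHermitian) :
    A = ∑ i, (hA.eigenvalues i : 𝕜) •
      vecMulVec (hA.eigenvectorBasis i) (star (hA.eigenvectorBasis i)) := by
  conv_lhs => rw [hA.spectral_theorem]
  ext a b
  simp only [Unitary.conjStarAlgAut_apply, mul_apply, diagonal, Function.comp_apply, of_apply,
    mul_ite, mul_zero, Finset.sum_ite_eq', Finset.mem_univ, if_true, sum_apply,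
    smul_apply, vecMulVec_apply, eigenvectorUnitary_apply, star_apply, smul_eq_mul,
    Pi.star_apply]
  exact Finset.sum_congr rfl fun i _ => by ring

theorem posSemidef_of_re_dotProduct_mulVec_nonneg (hA : A.IsHermitian)
    (h : ∀ v : n → 𝕜, star v ⬝ᵥ v = 1 → 0 ≤ RCLike.re (star v ⬝ᵥ (A *ᵥ v))) :
    A.PosSemidef := by
  refine hA.posSemidef_iff_eigenvalues_nonneg.mpr fun i => ?_
  rw [hA.eigenvalues_eq]
  exact h _ (by rw [star_eigenvectorBasis_dotProduct, if_pos rfl])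

end IsHermitian

end Matrix

open Matrix

theorem mul_sum_eq_zero_of_pairwise_insert {ι R : Type*} [NonUnitalNonAssocSemiring R]
    {s : Finset ι} {i : ι} {f : ι → R} (hi : i ∉ s)
    (horth : (insert i (s : Set ι)).Pairwise fun a b => f a * f b = 0) :
    f i * ∑ j ∈ s, f j = 0 ∧ (∑ j ∈ s, f j) * f i = 0 := by
  have hne (j : ι) (hj : j ∈ s) : i ≠ j := fun h => hi (h ▸ hj)
  rw [Finset.mul_sum, Finset.sum_mul]
  exact ⟨Finset.sum_eq_zero fun j hj =>
      horth (Set.mem_insert _ _) (Set.mem_insert_of_mem _ hj) (hne j hj),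
    Finset.sum_eq_zero fun j hj =>
      horth (Set.mem_insert_of_mem _ hj) (Set.mem_insert _ _) (hne j hj).symm⟩

theorem isProjection_vecMulVec_star {N : ℕ} {v : Fin N → ℂ} (hv : star v ⬝ᵥ v = 1) :
    IsProjection (vecMulVec v (star v)) :=
  ⟨by rw [vecMulVec_mul_vecMulVec, hv, one_smul], (posSemidef_vecMulVec_self_star v).isHermitian⟩

namespace IsProjection

variable {N : ℕ}

theorem zero : IsProjection (0 : Matrix (Fin N) (Fin N) ℂ) :=
  ⟨mul_zero 0, isHermitian_zero⟩

theorem one : IsProjection (1 : Matrix (Fin N) (Fin N) ℂ) :=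
  ⟨mul_one 1, isHermitian_one⟩

theorem add {E F : Matrix (Fin N) (Fin N) ℂ} (hE : IsProjection E) (hF : IsProjection F)
    (hEF : E * F = 0) (hFE : F * E = 0) : IsProjection (E + F) :=
  ⟨by rw [add_mul, mul_add, mul_add, hE.1, hF.1, hEF, hFE, add_zero, zero_add], hE.2.add hF.2⟩

theorem sum {ι : Type*} {s : Finset ι} {P : ι → Matrix (Fin N) (Fin N) ℂ}
    (hP : ∀ i ∈ s, IsProjection (P i)) (horth : (s : Set ι).Pairwise fun i j => P i * P j = 0) :
    IsProjection (∑ i ∈ s, P i) := by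
  classical
  induction s using Finset.induction_on with
  | empty => simpa using zero
  | insert i s hi ih =>
    rw [Finset.coe_insert] at horth
    have hPs : IsProjection (∑ j ∈ s, P j) :=
      ih (fun j hj => hP j (Finset.mem_insert_of_mem hj)) (horth.mono (Set.subset_insert _ _))
    obtain ⟨hleft, hright⟩ := mul_sum_eq_zero_of_pairwise_insert hi horth
    rw [Finset.sum_insert hi]
    exact (hP i (Finset.mem_insert_self i s)).add hPs hleft hright

theorem exists_eq_sum_vecMulVec {E : Matrix (Fin N) (Fin N) ℂ} (hE : IsProjection E) :
    ∃ (u : Fin N → Fin N → ℂ) (s : Finset (Fin N)),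
      (∀ i j, star (u i) ⬝ᵥ u j = if i = j then 1 else 0) ∧
      E = ∑ i ∈ s, vecMulVec (u i) (star (u i)) := by
  classical
  refine ⟨fun i => hE.2.eigenvectorBasis i, ({i | hE.2.eigenvalues i = 1} : Finset (Fin N)),
    hE.2.star_eigenvectorBasis_dotProduct, ?_⟩
  have h01 (i : Fin N) : hE.2.eigenvalues i = 0 ∨ hE.2.eigenvalues i = 1 :=
    IsIdempotentElem.spectrum_subset ℝ hE.1 (hE.2.eigenvalues_mem_spectrum_real i)
  conv_lhs => rw [hE.2.eq_sum_eigenvalues_smul_vecMulVec]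
  rw [Finset.sum_filter]
  refine Finset.sum_congr rfl fun i _ => ?_
  rcases h01 i with h | h <;> simp [h]

end IsProjection

def IsOrthogonallyAdditive {N : ℕ} (μ : Matrix (Fin N) (Fin N) ℂ → ℝ) : Prop :=
  ∀ E₁ E₂ : Matrix (Fin N) (Fin N) ℂ, IsProjection E₁ → IsProjection E₂ →
    Commute E₁ E₂ → E₁ * E₂ = 0 → μ E₁ + μ E₂ = μ (E₁ + E₂)

namespace IsOrthogonallyAdditive

variable {N : ℕ} {μ : Matrix (Fin N) (Fin N) ℂ → ℝ}

theorem map_zero (hμ : IsOrthogonallyAdditive μ) : μ 0 = 0 := by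
  have h := hμ 0 0 .zero .zero (Commute.refl 0) (mul_zero 0)
  rw [add_zero] at h
  linarith

theorem map_sum (hμ : IsOrthogonallyAdditive μ) {ι : Type*} {s : Finset ι}
    {P : ι → Matrix (Fin N) (Fin N) ℂ} (hP : ∀ i ∈ s, IsProjection (P i))
    (horth : (s : Set ι).Pairwise fun i j => P i * P j = 0) :
    μ (∑ i ∈ s, P i) = ∑ i ∈ s, μ (P i) := by
  classical
  induction s using Finset.induction_on with
  | empty => simpa using hμ.map_zero
  | insert i s hi ih =>
    rw [Finset.coe_insert] at horth
    have hPs : ∀ j ∈ s, IsProjection (P j) := fun j hj => hP j (Finset.mem_insert_of_mem hj)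
    have horth_s := horth.mono (Set.subset_insert _ _)
    obtain ⟨hleft, hright⟩ := mul_sum_eq_zero_of_pairwise_insert hi horth
    rw [Finset.sum_insert hi, Finset.sum_insert hi, ← ih hPs horth_s,
      hμ _ _ (hP i (Finset.mem_insert_self i s)) (IsProjection.sum hPs horth_s)
        (hleft.trans hright.symm) hleft]

theorem ofReal_eq_trace_mul (hμ : IsOrthogonallyAdditive μ) (ρ : Matrix (Fin N) (Fin N) ℂ)
    (hrankOne : ∀ v : Fin N → ℂ, star v ⬝ᵥ v = 1 →
      (μ (vecMulVec v (star v)) : ℂ) = star v ⬝ᵥ (ρ *ᵥ v))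
    {E : Matrix (Fin N) (Fin N) ℂ} (hE : IsProjection E) :
    (μ E : ℂ) = (ρ * E).trace := by
  obtain ⟨u, s, hu, rfl⟩ := hE.exists_eq_sum_vecMulVec
  have hunit (i : Fin N) : star (u i) ⬝ᵥ u i = 1 := by rw [hu, if_pos rfl]
  have horth : (s : Set (Fin N)).Pairwise fun i j =>
      vecMulVec (u i) (star (u i)) * vecMulVec (u j) (star (u j)) = 0 := fun i _ j _ hij => by
    dsimp only
    rw [vecMulVec_mul_vecMulVec, hu, if_neg hij, zero_smul, vecMulVec_zero]
  rw [hμ.map_sum (fun i _ => isProjection_vecMulVec_star (hunit i)) horth, Complex.ofReal_sum,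
    Finset.mul_sum, trace_sum]
  exact Finset.sum_congr rfl fun i _ => by rw [hrankOne _ (hunit i), trace_mul_vecMulVec_star]

end IsOrthogonallyAdditive

/-- Gleason's theorem as a corollary of the generalized Gleason theorem. If `μ` is a
nonnegative real-valued function on the orthogonal projections of `ℂ^N` with `μ(1) = 1`,
additive on commuting orthogonal projections with `E₁E₂ = 0`, and of the form
`μ(P) = tr(ηP) + K` on rank-1 orthogonal projections for some Hermitian `η` and real `K`,
then `ρ := η + K·1` is positive semidefinite with `tr ρ = 1` and `μ(E) = tr(ρE)` for every
orthogonal projection `E`. -/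
theorem gleason_from_generalized (N : ℕ) (μ : Matrix (Fin N) (Fin N) ℂ → ℝ)
    (hpos : ∀ E : Matrix (Fin N) (Fin N) ℂ, IsProjection E → 0 ≤ μ E)
    (hone : μ 1 = 1)
    (hadd : ∀ E₁ E₂ : Matrix (Fin N) (Fin N) ℂ, IsProjection E₁ → IsProjection E₂ →
      Commute E₁ E₂ → E₁ * E₂ = 0 → μ E₁ + μ E₂ = μ (E₁ + E₂))
    (η : Matrix (Fin N) (Fin N) ℂ) (hη : η.IsHermitian) (K : ℝ)
    (hlin : ∀ P : Matrix (Fin N) (Fin N) ℂ, IsProjection P → P.rank = 1 →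
      (μ P : ℂ) = (η * P).trace + (K : ℂ)) :
    (η + (K : ℂ) • (1 : Matrix (Fin N) (Fin N) ℂ)).PosSemidef ∧
    (η + (K : ℂ) • (1 : Matrix (Fin N) (Fin N) ℂ)).trace = 1 ∧
    ∀ E : Matrix (Fin N) (Fin N) ℂ, IsProjection E →
      (μ E : ℂ) = ((η + (K : ℂ) • (1 : Matrix (Fin N) (Fin N) ℂ)) * E).trace := by
  set ρ := η + (K : ℂ) • (1 : Matrix (Fin N) (Fin N) ℂ)
  have hrankOne (v : Fin N → ℂ) (hv : star v ⬝ᵥ v = 1) :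
      (μ (vecMulVec v (star v)) : ℂ) = star v ⬝ᵥ (ρ *ᵥ v) := by
    have hv0 : v ≠ 0 := by rintro rfl; simp at hv
    rw [hlin _ (isProjection_vecMulVec_star hv) (rank_vecMulVec_star_self hv0),
      trace_mul_vecMulVec_star, add_mulVec, dotProduct_add, smul_mulVec, one_mulVec,
      dotProduct_smul, hv, smul_eq_mul, mul_one]
  have hμρ (E : Matrix (Fin N) (Fin N) ℂ) (hE : IsProjection E) : (μ E : ℂ) = (ρ * E).trace :=
    IsOrthogonallyAdditive.ofReal_eq_trace_mul hadd ρ hrankOne hE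
  have hρ : ρ.IsHermitian := hη.add (isHermitian_one.smul (Complex.conj_ofReal K))
  refine ⟨hρ.posSemidef_of_re_dotProduct_mulVec_nonneg fun v hv => ?_, ?_, hμρ⟩
  · rw [← hrankOne v hv, RCLike.re_to_complex, Complex.ofReal_re]
    exact hpos _ (isProjection_vecMulVec_star hv)
  · simpa [hone] using (hμρ 1 .one).symm
end
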